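/- arXiv:2501.04162 — 5 statements merged into one kernel-verified Lean document; each statement's English description precedes it below -/
import Mathlib

section
/- Let $p \ge 5$ be a prime and $r \ge 1$ an integer. Let $\Delta$ be a cyclic group of order $p^r$ with generator $\delta$, let $\Lambda = \mathbb{Z}_p[\Delta]$ be the group algebra, let $\iota$ be the ring automorphism of $\Lambda$ induced by $g \mapsto g^{-1}$ on $\Delta$, and let $\Lambda^+$ be the subring of $\Lambda$ fixed by $\iota$. Then there exists a distinguished polynomial $\Psi \in \mathbb{Z}_p[X]$ of degree $(p^r-1)/2$ with $v_p(\Psi(0)) = r$ such that the $\mathbb{Z}_p$-algebra homomorphism $\mathbb{Z}_p[X]/(X\,\Psi(X)) \to \Lambda^+$ sending $X$ to $[\delta] + [\delta^{-1}] - 2$ is a ring isomorphism. -/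
/-!
Write `u = [δ]`, `T = u + u⁻¹ - 2 = (u - 1)²/u` and `p ^ r = 2m + 1`, and take `Ψ = ψ_m` with
`ψ_m(x + x⁻¹ - 2) = x⁻ᵐ + ⋯ + xᵐ`. Then `(u - 1)·uᵐ·Ψ(T) = u ^ p ^ r - 1 = 0`, so `T·Ψ(T) = 0`.
Conversely, for `deg q ≤ m` the element `uᵐ·q(T)` is a polynomial in `u` of degree `≤ 2m < p ^ r`
whose coefficient of `u ^ (m + deg q)` is the leading coefficient of `q`; since the powers
`1, u, …, u ^ (p ^ r - 1)` are independent, `1, T, …, Tᵐ` are too, and the kernel is `(X·Ψ)`.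
The same identity over `𝔽_p(x)`, where `x ^ p ^ r - 1 = (x - 1) ^ p ^ r`, shows `Ψ ≡ Xᵐ mod p`,
and `Ψ(0) = 2m + 1 = p ^ r`. Finally `[g] + [g⁻¹]` is a Dickson polynomial in `[δ] + [δ⁻¹]`, so
as `2` is a unit every `ι`-invariant `f = (f + ι f)/2` lies in `ℤ_p[T]`.
-/

open Polynomial

/-- `psiPoly k (x + x⁻¹ - 2) = x⁻ᵏ + ⋯ + xᵏ`. -/
noncomputable def psiPoly : ℕ → ℤ[X]
  | 0 => 1
  | 1 => X + 3
  | k + 2 => (X + 2) * psiPoly (k + 1) - psiPoly k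

theorem psiPoly_monic_and_natDegree (k : ℕ) : (psiPoly k).Monic ∧ (psiPoly k).natDegree = k := by
  induction k using Nat.twoStepInduction with
  | zero => exact ⟨monic_one, natDegree_one⟩
  | one => exact ⟨monic_X_add_C 3, natDegree_X_add_C 3⟩
  | more k ih₀ ih₁ =>
    have hX2 : (X + 2 : ℤ[X]).Monic := monic_X_add_C 2
    have hX2deg : (X + 2 : ℤ[X]).natDegree = 1 := natDegree_X_add_C 2
    have hd : ((X + 2) * psiPoly (k + 1)).natDegree = k + 2 := by
      rw [hX2.natDegree_mul ih₁.1, ih₁.2, hX2deg, add_comm]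
    have hlt : (psiPoly k).natDegree < ((X + 2) * psiPoly (k + 1)).natDegree := by
      rw [hd, ih₀.2]; omega
    exact ⟨(hX2.mul ih₁.1).sub_of_left (degree_lt_degree hlt),
      (natDegree_sub_eq_left_of_natDegree_lt hlt).trans hd⟩

theorem psiPoly_coeff_zero (k : ℕ) : (psiPoly k).coeff 0 = 2 * k + 1 := by
  induction k using Nat.twoStepInduction with
  | zero => simp [psiPoly]
  | one => simp [psiPoly]
  | more k ih₀ ih₁ =>
    simp only [psiPoly, coeff_sub, mul_coeff_zero, ih₀, ih₁, coeff_add, coeff_X_zero,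
      coeff_ofNat_zero]
    push_cast
    ring

theorem sub_one_mul_pow_mul_aeval_psiPoly {A : Type*} [CommRing A] [Algebra ℤ A] {x y : A}
    (hxy : x * y = 1) (k : ℕ) :
    (x - 1) * x ^ k * aeval (x + y - 2) (psiPoly k) = x ^ (2 * k + 1) - 1 := by
  induction k using Nat.twoStepInduction with
  | zero => simp [psiPoly]
  | one =>
    simp only [psiPoly, map_add, aeval_X, map_ofNat]
    linear_combination (x - 1) * hxy
  | more k ih₀ ih₁ =>
    simp only [psiPoly, map_sub, map_mul, map_add, aeval_X, map_ofNat]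
    linear_combination x * (x + y) * ih₁ - x ^ 2 * ih₀ + (x ^ (2 * k + 3) - 1) * hxy

theorem mul_aeval_psiPoly_eq_zero {A : Type*} [CommRing A] [Algebra ℤ A] {x y : A}
    (hxy : x * y = 1) {k : ℕ} (hk : x ^ (2 * k + 1) = 1) :
    (x + y - 2) * aeval (x + y - 2) (psiPoly k) = 0 := by
  refine ((IsUnit.of_mul_eq_one y hxy).pow (k + 1)).mul_right_eq_zero.mp ?_
  linear_combination (x - 1) * sub_one_mul_pow_mul_aeval_psiPoly hxy k + (x - 1) * hk
    + x ^ k * aeval (x + y - 2) (psiPoly k) * hxy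

section SymmetricLift

variable {R : Type*} [CommRing R]

/-- `symmetricLift d q` is `xᵈ · q(x + x⁻¹ - 2)`, written as a polynomial in `x`. -/
noncomputable def symmetricLift (d : ℕ) (q : R[X]) : R[X] :=
  ∑ i ∈ Finset.range (d + 1), C (q.coeff i) * (X - 1) ^ (2 * i) * X ^ (d - i)

theorem natDegree_X_sub_one_pow_le (n : ℕ) : ((X - 1 : R[X]) ^ n).natDegree ≤ n := by
  simpa using natDegree_pow_le_of_le n (natDegree_X_sub_C_le (1 : R))

theorem natDegree_symmetricLift_le (d : ℕ) (q : R[X]) :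
    (symmetricLift d q).natDegree ≤ 2 * d := by
  refine natDegree_sum_le_of_forall_le _ _ fun i hi => ?_
  have hi : i ≤ d := Nat.lt_succ_iff.mp (Finset.mem_range.mp hi)
  calc (C (q.coeff i) * (X - 1) ^ (2 * i) * X ^ (d - i)).natDegree
      ≤ 0 + 2 * i + (d - i) :=
        natDegree_mul_le_of_le (natDegree_mul_le_of_le (natDegree_C _).le
          (natDegree_X_sub_one_pow_le _)) (natDegree_X_pow_le _)
    _ ≤ 2 * d := by omega

theorem aeval_symmetricLift {A : Type*} [CommRing A] [Algebra R A] {x y : A} (hxy : x * y = 1)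
    {d : ℕ} {q : R[X]} (hq : q.natDegree ≤ d) :
    aeval x (symmetricLift d q) = x ^ d * aeval (x + y - 2) q := by
  rw [symmetricLift, map_sum, aeval_eq_sum_range' (Nat.lt_succ_of_le hq), Finset.mul_sum]
  refine Finset.sum_congr rfl fun i hi => ?_
  have hi : i ≤ d := Nat.lt_succ_iff.mp (Finset.mem_range.mp hi)
  have hpow : x ^ d * (x + y - 2) ^ i = (x - 1) ^ (2 * i) * x ^ (d - i) := by
    rw [pow_mul, ← show x * (x + y - 2) = (x - 1) ^ 2 by linear_combination hxy, mul_pow,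
      mul_right_comm, ← pow_add, Nat.add_sub_cancel' hi]
  simp only [map_mul, map_pow, map_sub, aeval_C, aeval_X, map_one, Algebra.smul_def]
  linear_combination algebraMap R A (q.coeff i) * hpow.symm

theorem coeff_symmetricLift_add_natDegree {d : ℕ} {q : R[X]} (hq : q.natDegree ≤ d) :
    (symmetricLift d q).coeff (d + q.natDegree) = q.leadingCoeff := by
  set e := q.natDegree
  rw [symmetricLift, finsetSum_coeff, Finset.sum_eq_single e]
  · have hlead : ((X - 1 : R[X]) ^ (2 * e)).coeff (2 * e) = 1 := by
      simpa [coeff_one] using coeff_pow_of_natDegree_le (m := 2 * e) (natDegree_X_sub_C_le (1 : R))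
    rw [coeff_mul_X_pow', if_pos (by omega), coeff_C_mul, show d + e - (d - e) = 2 * e by omega,
      hlead, mul_one, leadingCoeff]
  · intro i hi hie
    rcases lt_or_gt_of_ne hie with hlt | hgt
    · rw [coeff_mul_X_pow', if_pos (by omega), coeff_C_mul,
        coeff_eq_zero_of_natDegree_lt ((natDegree_X_sub_one_pow_le _).trans_lt (by omega)),
        mul_zero]
    · rw [coeff_eq_zero_of_natDegree_lt hgt]
      simp
  · intro he
    exact absurd (Finset.mem_range.mpr (Nat.lt_succ_of_le hq)) he

theorem eq_zero_of_symmetricLift_eq_zero {d : ℕ} {q : R[X]} (hq : q.natDegree ≤ d)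
    (h : symmetricLift d q = 0) : q = 0 := by
  rw [← leadingCoeff_eq_zero, ← coeff_symmetricLift_add_natDegree hq, h, coeff_zero]

theorem eq_zero_of_aeval_add_sub_two_eq_zero {A : Type*} [CommRing A] [Algebra R A] {x y : A}
    (hxy : x * y = 1) {d : ℕ}
    (hx : ∀ w : R[X], w.natDegree ≤ 2 * d → aeval x w = 0 → w = 0)
    {q : R[X]} (hq : q.natDegree ≤ d) (h : aeval (x + y - 2) q = 0) : q = 0 :=
  eq_zero_of_symmetricLift_eq_zero hq <| hx _ (natDegree_symmetricLift_le d q) <| by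
    rw [aeval_symmetricLift hxy hq, h, mul_zero]

end SymmetricLift

theorem psiPoly_map_zmod {p : ℕ} [Fact p.Prime] {r m : ℕ} (hm : 2 * m + 1 = p ^ r) :
    (psiPoly m).map (algebraMap ℤ (ZMod p)) = X ^ m := by
  set x : RatFunc (ZMod p) := algebraMap (ZMod p)[X] _ X with hxdef
  have hx : x ≠ 0 := RatFunc.algebraMap_ne_zero X_ne_zero
  have hx1 : x - 1 ≠ 0 := by
    rw [hxdef, ← map_one (algebraMap (ZMod p)[X] _), ← map_sub]
    exact RatFunc.algebraMap_ne_zero (X_sub_C_ne_zero 1)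
  have hxy : x * x⁻¹ = 1 := mul_inv_cancel₀ hx
  have hT : x * (x + x⁻¹ - 2) = (x - 1) ^ 2 := by linear_combination hxy
  have haeval : aeval (x + x⁻¹ - 2) (psiPoly m) = (x + x⁻¹ - 2) ^ m := by
    refine mul_left_cancel₀ (mul_ne_zero hx1 (pow_ne_zero m hx)) ?_
    have hfrob : x ^ p ^ r - 1 = (x - 1) ^ p ^ r := by rw [sub_pow_char_pow, one_pow]
    rw [sub_one_mul_pow_mul_aeval_psiPoly hxy, hm, hfrob, ← hm, pow_succ', mul_assoc, ← mul_pow,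
      hT, ← pow_mul]
  have hinj : ∀ w : (ZMod p)[X], w.natDegree ≤ 2 * m → aeval x w = 0 → w = 0 := by
    intro w _ hw
    rwa [hxdef, aeval_algebraMap_apply, aeval_X_left_apply,
      map_eq_zero_iff _ (RatFunc.algebraMap_injective _)] at hw
  refine sub_eq_zero.mp (eq_zero_of_aeval_add_sub_two_eq_zero hxy hinj ?_ ?_)
  · refine (natDegree_sub_le _ _).trans (max_le ?_ (natDegree_X_pow_le m))
    exact natDegree_map_le.trans (psiPoly_monic_and_natDegree m).2.le
  · rw [map_sub, aeval_map_algebraMap, haeval, map_pow, aeval_X, sub_self]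

theorem prime_dvd_coeff_psiPoly {p : ℕ} [Fact p.Prime] {r m : ℕ} (hm : 2 * m + 1 = p ^ r)
    {i : ℕ} (hi : i < m) : (p : ℤ) ∣ (psiPoly m).coeff i := by
  have h := congrArg (coeff · i) (psiPoly_map_zmod hm)
  simp only [coeff_map, coeff_X_pow, if_neg hi.ne, algebraMap_int_eq, eq_intCast] at h
  exact (ZMod.intCast_zmod_eq_zero_iff_dvd _ p).mp h

theorem MonoidAlgebra.eq_zero_of_aeval_of_eq_zero {R G : Type*} [CommSemiring R] [Monoid G]
    {g : G} {w : R[X]} (hw : w.natDegree < orderOf g) (h : aeval (of R G g) w = 0) : w = 0 := by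
  have hcoeff : ∀ a < orderOf g, (aeval (of R G g) w).coeff (g ^ a) = w.coeff a := by
    intro a ha
    have hsingle : ∀ i, w.coeff i • of R G g ^ i = single (g ^ i) (w.coeff i) := fun i => by
      rw [← map_pow, of_apply, smul_single', mul_one]
    simp only [aeval_eq_sum_range' hw, hsingle, coeff_sum, Finsupp.finsetSum_apply, coeff_single]
    refine (Finset.sum_eq_single a (fun i hi hia => ?_) (absurd (Finset.mem_range.mpr ha))).trans
      Finsupp.single_eq_same
    exact Finsupp.single_eq_of_ne fun hg =>
      hia (pow_injOn_Iio_orderOf ha (Finset.mem_range.mp hi) hg).symm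
  ext a
  rcases lt_or_ge a (orderOf g) with ha | ha
  · rw [← hcoeff a ha, h, coeff_zero, Finsupp.coe_zero, Pi.zero_apply, Polynomial.coeff_zero]
  · exact coeff_eq_zero_of_natDegree_lt (hw.trans_le ha)

theorem MonoidAlgebra.equalizer_domCongr_inv_eq_adjoin {R G : Type*} [CommRing R] [CommGroup G]
    (h2 : IsUnit (2 : R)) {δ : G} (hδ : ∀ g : G, g ∈ Subgroup.zpowers δ) :
    AlgHom.equalizer (domCongr R R (MulEquiv.inv G)).toAlgHom (AlgHom.id R (MonoidAlgebra R G))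
      = Algebra.adjoin R {of R G δ + of R G δ⁻¹ - 2} := by
  set ι := (domCongr R R (MulEquiv.inv G)).toAlgHom
  set S := Algebra.adjoin R {of R G δ + of R G δ⁻¹ - 2}
  have hι : ∀ g : G, ι (of R G g) = of R G g⁻¹ := fun g => by
    simp [ι, of_apply, domCongr_single]
  have hadd : of R G δ + of R G δ⁻¹ ∈ S := by
    have h := add_mem (Algebra.self_mem_adjoin_singleton R (of R G δ + of R G δ⁻¹ - 2))
      (algebraMap_mem S 2)
    rwa [map_ofNat, sub_add_cancel] at h
  have hpow : ∀ n : ℕ, of R G δ ^ n + of R G δ⁻¹ ^ n ∈ S := fun n => by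
    rw [← dickson_one_one_eval_add_inv _ _ (by rw [← map_mul, mul_inv_cancel, map_one]),
      ← map_one (algebraMap R (MonoidAlgebra R G)), ← map_dickson, eval_map_algebraMap]
    exact Algebra.adjoin_singleton_le hadd (aeval_mem_adjoin_singleton R _)
  have hsym : ∀ f, f + ι f ∈ S := fun f => by
    induction f using MonoidAlgebra.induction_on with
    | of g =>
      obtain ⟨k, rfl⟩ := Subgroup.mem_zpowers_iff.mp (hδ g)
      rcases Int.eq_nat_or_neg k with ⟨n, rfl | rfl⟩
      · rw [hι, zpow_natCast, ← inv_pow, map_pow, map_pow]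
        exact hpow n
      · rw [hι, zpow_neg, inv_inv, zpow_natCast, ← inv_pow, map_pow, map_pow, add_comm]
        exact hpow n
    | add f₁ f₂ h₁ h₂ => simpa [add_add_add_comm] using add_mem h₁ h₂
    | smul c f h => simpa [smul_add] using Subalgebra.smul_mem S h c
  refine le_antisymm (fun f hf => ?_) (Algebra.adjoin_le ?_)
  · have hf2 : (2 : R) • f ∈ S := by
      rw [two_smul]
      simpa [(AlgHom.mem_equalizer _ _ f).mp hf] using hsym f
    simpa [smul_smul] using Subalgebra.smul_mem S hf2 ↑h2.unit⁻¹
  · rw [Set.singleton_subset_iff, SetLike.mem_coe, AlgHom.mem_equalizer]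
    simp only [map_sub, map_add, hι, inv_inv, map_ofNat, AlgHom.id_apply]
    abel

theorem Polynomial.ker_aeval_eq_span_singleton {R A : Type*} [CommRing R] [Nontrivial R] [Ring A]
    [Algebra R A] {a : A} {f : R[X]} (hf : f.Monic) (hfa : aeval a f = 0)
    (hmin : ∀ q : R[X], q.natDegree < f.natDegree → aeval a q = 0 → q = 0) :
    RingHom.ker (aeval a) = Ideal.span {f} := by
  ext q
  rw [RingHom.mem_ker, Ideal.mem_span_singleton]
  constructor
  · intro hq
    rw [← modByMonic_eq_zero_iff_dvd hf]
    have hr : aeval a (q %ₘ f) = 0 := by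
      rw [modByMonic_eq_sub_mul_div q f, map_sub, map_mul, hq, hfa, zero_mul, sub_zero]
    by_contra hne
    exact hne (hmin _ (natDegree_lt_natDegree hne (degree_modByMonic_lt q hf)) hr)
  · rintro ⟨g, rfl⟩
    rw [map_mul, hfa, zero_mul]

theorem PadicInt.isUnit_two {p : ℕ} [Fact p.Prime] (hp : p ≠ 2) : IsUnit (2 : ℤ_[p]) := by
  simpa using PadicInt.isUnit_iff.mpr
    (norm_natCast_eq_one_iff.mpr ((Nat.coprime_primes Fact.out Nat.prime_two).mpr hp))

theorem stmt_0_general (p : ℕ) [Fact p.Prime] (hp5 : 5 ≤ p) (r : ℕ)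
    (Δ : Type) [CommGroup Δ] [Fintype Δ] (hcard : Fintype.card Δ = p ^ r)
    (δ : Δ) (hδ : ∀ x : Δ, x ∈ Subgroup.zpowers δ) :
    ∃ Ψ : Polynomial ℤ_[p],
      Ψ.Monic
      ∧ (∀ i < Ψ.natDegree, (p : ℤ_[p]) ∣ Ψ.coeff i)
      ∧ Ψ.natDegree = (p ^ r - 1) / 2
      ∧ Ψ.coeff 0 ≠ 0
      ∧ (Ψ.coeff 0).valuation = (r : ℤ)
      ∧ RingHom.ker (Polynomial.aeval
            (MonoidAlgebra.of ℤ_[p] Δ δ + MonoidAlgebra.of ℤ_[p] Δ δ⁻¹ - 2) :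
            Polynomial ℤ_[p] →ₐ[ℤ_[p]] MonoidAlgebra ℤ_[p] Δ)
          = Ideal.span {Polynomial.X * Ψ}
      ∧ (Polynomial.aeval
            (MonoidAlgebra.of ℤ_[p] Δ δ + MonoidAlgebra.of ℤ_[p] Δ δ⁻¹ - 2) :
            Polynomial ℤ_[p] →ₐ[ℤ_[p]] MonoidAlgebra ℤ_[p] Δ).range
          = AlgHom.equalizer
              (MonoidAlgebra.domCongr ℤ_[p] ℤ_[p] (MulEquiv.inv Δ)).toAlgHom
              (AlgHom.id ℤ_[p] (MonoidAlgebra ℤ_[p] Δ)) := by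
  have hp : p.Prime := Fact.out
  obtain ⟨m, hm⟩ : ∃ m, p ^ r = 2 * m + 1 := (hp.odd_of_ne_two (by omega)).pow
  have horder : orderOf δ = 2 * m + 1 := by
    rw [orderOf_eq_card_of_forall_mem_zpowers hδ, Nat.card_eq_fintype_card, hcard, hm]
  have hδn : MonoidAlgebra.of ℤ_[p] Δ δ ^ (2 * m + 1) = 1 := by
    rw [← map_pow, ← horder, pow_orderOf_eq_one, map_one]
  have hδinv : MonoidAlgebra.of ℤ_[p] Δ δ * MonoidAlgebra.of ℤ_[p] Δ δ⁻¹ = 1 := by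
    rw [← map_mul, mul_inv_cancel, map_one]
  obtain ⟨hmonic, hdeg⟩ := psiPoly_monic_and_natDegree m
  set Ψ := (psiPoly m).map (algebraMap ℤ ℤ_[p])
  have hΨdeg : Ψ.natDegree = m := by rw [hmonic.natDegree_map, hdeg]
  have hXΨdeg : (X * Ψ).natDegree = m + 1 := by
    rw [monic_X.natDegree_mul (hmonic.map _), natDegree_X, hΨdeg, add_comm]
  have hcoeff : Ψ.coeff 0 = (p : ℤ_[p]) ^ r := by
    rw [coeff_map, psiPoly_coeff_zero, eq_intCast]
    exact_mod_cast hm.symm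
  refine ⟨Ψ, hmonic.map _, fun i hi => ?_, by omega, ?_, ?_, ?_, ?_⟩
  · simpa [Ψ] using map_dvd (algebraMap ℤ ℤ_[p]) (prime_dvd_coeff_psiPoly hm.symm (hΨdeg ▸ hi))
  · rw [hcoeff]
    exact pow_ne_zero r (Nat.cast_ne_zero.mpr hp.ne_zero)
  · simp [hcoeff]
  · refine ker_aeval_eq_span_singleton (monic_X.mul (hmonic.map _)) ?_ fun q hq h => ?_
    · rw [map_mul, aeval_X, aeval_map_algebraMap, mul_aeval_psiPoly_eq_zero hδinv hδn]
    · refine eq_zero_of_aeval_add_sub_two_eq_zero hδinv (d := m) (fun w hw => ?_) (by omega) h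
      exact MonoidAlgebra.eq_zero_of_aeval_of_eq_zero (by omega)
  · rw [← Algebra.adjoin_singleton_eq_range_aeval]
    exact (MonoidAlgebra.equalizer_domCongr_inv_eq_adjoin (PadicInt.isUnit_two (by omega)) hδ).symm

/-- Let `p ≥ 5` be prime, `r ≥ 1`, `Δ` a cyclic group of order `p^r` with generator `δ`,
`Λ = ℤ_p[Δ]` the group algebra, `ι` the ring automorphism of `Λ` induced by `g ↦ g⁻¹` and
`Λ⁺ ⊆ Λ` the fixed subring of `ι`.  Then there is a distinguished polynomial
`Ψ ∈ ℤ_p[X]` of degree `(p^r - 1)/2` with `v_p(Ψ(0)) = r` such that the `ℤ_p`-algebra map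
`ℤ_p[X]/(X·Ψ(X)) → Λ⁺` sending `X` to `[δ] + [δ⁻¹] - 2` is a ring isomorphism: i.e. the
evaluation map `ℤ_p[X] → Λ` at `[δ] + [δ⁻¹] - 2` has kernel the ideal generated by
`X·Ψ(X)` and range `Λ⁺`. -/
theorem stmt_0 (p : ℕ) [Fact p.Prime] (hp5 : 5 ≤ p) (r : ℕ) (hr : 1 ≤ r)
    (Δ : Type) [CommGroup Δ] [Fintype Δ] (hcard : Fintype.card Δ = p ^ r)
    (δ : Δ) (hδ : ∀ x : Δ, x ∈ Subgroup.zpowers δ) :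
    ∃ Ψ : Polynomial ℤ_[p],
      Ψ.Monic
      ∧ (∀ i < Ψ.natDegree, (p : ℤ_[p]) ∣ Ψ.coeff i)
      ∧ Ψ.natDegree = (p ^ r - 1) / 2
      ∧ Ψ.coeff 0 ≠ 0
      ∧ (Ψ.coeff 0).valuation = (r : ℤ)
      ∧ RingHom.ker (Polynomial.aeval
            (MonoidAlgebra.of ℤ_[p] Δ δ + MonoidAlgebra.of ℤ_[p] Δ δ⁻¹ - 2) :
            Polynomial ℤ_[p] →ₐ[ℤ_[p]] MonoidAlgebra ℤ_[p] Δ)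
          = Ideal.span {Polynomial.X * Ψ}
      ∧ (Polynomial.aeval
            (MonoidAlgebra.of ℤ_[p] Δ δ + MonoidAlgebra.of ℤ_[p] Δ δ⁻¹ - 2) :
            Polynomial ℤ_[p] →ₐ[ℤ_[p]] MonoidAlgebra ℤ_[p] Δ).range
          = AlgHom.equalizer
              (MonoidAlgebra.domCongr ℤ_[p] ℤ_[p] (MulEquiv.inv Δ)).toAlgHom
              (AlgHom.id ℤ_[p] (MonoidAlgebra ℤ_[p] Δ)) :=
  stmt_0_general p hp5 r Δ hcard δ hδ
end

section
/- Let $p$ be a prime. Let $\varphi : \mathbb{Z}_p\llbracket X \rrbracket \to \mathbb{Z}_p\llbracket T \rrbracket$ be the continuous $\mathbb{Z}_p$-algebra homomorphism determined by substituting $X \mapsto T^2(1+T)^{-1}$ (note $1+T$ is a unit and $T^2(1+T)^{-1}$ has positive order, so this substitution is well defined). View $\mathbb{Z}_p\llbracket T \rrbracket$ as a $\mathbb{Z}_p\llbracket X \rrbracket$-algebra via $\varphi$. Then the $\mathbb{Z}_p\llbracket X \rrbracket$-algebra homomorphism $\mathbb{Z}_p\llbracket X \rrbracket[\lambda]/(\lambda^2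 - (2+X)\lambda + 1) \to \mathbb{Z}_p\llbracket T \rrbracket$ sending $\lambda$ to $1+T$ is a ring isomorphism. In particular, $\mathbb{Z}_p\llbracket T \rrbracket$ is free of rank $2$ as a module over $\mathbb{Z}_p\llbracket X \rrbracket$ via $\varphi$. -/
/-!
Let `s = φ X = T²(1+T)⁻¹`, i.e. `T²` times a unit. Everything rests on the bijectivity of
`(a, b) ↦ φ a + φ b · T`. If `φ a + φ b · T = 0`, the coefficients of `1` and `T` force
`X ∣ a` and `X ∣ b`, and cancelling `s` leaves a zero of the same form with `a / X`, `b / X`,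
so all coefficients vanish. Conversely, every `g` is `c + d T + s r` with constants `c, d`;
iterating on `r` yields `s`-adic digits, which are the coefficients of a preimage `(a, b)`.
Since `λ = 1 + T` satisfies `λ² - (2 + s)λ + 1 = T² - s (1 + T) = 0`, and every polynomial is
congruent modulo this monic quadratic to some `a + bλ`, the quadratic generates the kernel.
-/

open PowerSeries

namespace PowerSeries

variable {R : Type*} [CommRing R]

theorem eq_of_forall_X_pow_dvd_sub {f g : R⟦X⟧} (h : ∀ n, X ^ n ∣ f - g) : f = g := by
  ext m
  have hm := X_pow_dvd_iff.mp (h (m + 1)) m m.lt_succ_self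
  rwa [map_sub, sub_eq_zero] at hm

theorem X_pow_dvd_sub_trunc (f : R⟦X⟧) (n : ℕ) : X ^ n ∣ f - (trunc n f : R⟦X⟧) :=
  X_pow_dvd_iff.mpr fun m hm => by
    rw [map_sub, Polynomial.coeff_coe, coeff_trunc, if_pos hm, sub_self]

theorem exists_eq_C_add_C_mul_X_add_mul_of_dvd {s : R⟦X⟧} (hs : s ∣ X ^ 2) (g : R⟦X⟧) :
    ∃ (c d : R) (r : R⟦X⟧), g = C c + C d * X + s * r := by
  obtain ⟨w, hw⟩ := hs
  obtain ⟨g₁, hg⟩ : ∃ g₁, g = X * g₁ + C (constantCoeff g) := ⟨_, eq_X_mul_shift_add_const g⟩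
  obtain ⟨g₂, hg₁⟩ : ∃ g₂, g₁ = X * g₂ + C (constantCoeff g₁) :=
    ⟨_, eq_X_mul_shift_add_const g₁⟩
  exact ⟨constantCoeff g, constantCoeff g₁, w * g₂, by linear_combination hg + X * hg₁ + g₂ * hw⟩

def IsSubstHom (φ : R⟦X⟧ →+* R⟦X⟧) (s : R⟦X⟧) : Prop :=
  ∀ f n, φ f - (trunc n f).eval₂ C s ∈ Ideal.span {X ^ n}

namespace IsSubstHom

variable {φ : R⟦X⟧ →+* R⟦X⟧} {s : R⟦X⟧}

theorem X_pow_dvd (h : IsSubstHom φ s) (f : R⟦X⟧) (n : ℕ) :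
    X ^ n ∣ φ f - (trunc n f).eval₂ C s :=
  Ideal.mem_span_singleton.mp (h f n)

theorem map_C (h : IsSubstHom φ s) (c : R) : φ (C c) = C c :=
  eq_of_forall_X_pow_dvd_sub fun n =>
    (pow_dvd_pow X n.le_succ).trans <| by simpa using h.X_pow_dvd (C c) (n + 1)

theorem map_X (h : IsSubstHom φ s) : φ X = s :=
  eq_of_forall_X_pow_dvd_sub fun n =>
    (pow_dvd_pow X (n.le_add_right 2)).trans <| by simpa using h.X_pow_dvd X (n + 2)

theorem map_eq_mul_add_C (h : IsSubstHom φ s) (f : R⟦X⟧) :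
    φ f = s * φ (mk fun k => coeff (k + 1) f) + C (constantCoeff f) := by
  conv_lhs => rw [eq_X_mul_shift_add_const f]
  rw [map_add, map_mul, h.map_X, h.map_C]

theorem exists_X_mul_of_map_add_map_mul_X_eq_zero (h : IsSubstHom φ s)
    (hs : Associated (X ^ 2) s) {a b : R⟦X⟧} (hab : φ a + φ b * X = 0) :
    ∃ a' b', a = X * a' ∧ b = X * b' ∧ φ a' + φ b' * X = 0 := by
  obtain ⟨u, rfl⟩ := hs
  have ha := h.map_eq_mul_add_C a
  have hb := h.map_eq_mul_add_C b
  have ha₀ : constantCoeff a = 0 := by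
    simpa [ha, hb] using congrArg constantCoeff hab
  have hb₀ : constantCoeff b = 0 := by
    simpa [ha, hb, ha₀, coeff_succ_mul_X, pow_two, mul_assoc, coeff_succ_X_mul] using
      congrArg (coeff 1) hab
  obtain ⟨a', rfl⟩ := X_dvd_iff.mpr ha₀
  obtain ⟨b', rfl⟩ := X_dvd_iff.mpr hb₀
  refine ⟨a', b', rfl, rfl, (Units.mul_right_eq_zero u).mp (X_pow_mul_cancel (k := 2) ?_)⟩
  rw [mul_zero, ← hab, map_mul, map_mul, h.map_X]
  ring

theorem map_trunc_succ (h : IsSubstHom φ s) (f : R⟦X⟧) (n : ℕ) :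
    φ (trunc (n + 1) f) = φ (trunc n f) + C (coeff n f) * s ^ n := by
  rw [trunc_succ, Polynomial.coe_add, Polynomial.coe_monomial, monomial_eq_C_mul_X_pow, map_add,
    map_mul, map_pow, h.map_C, h.map_X]

theorem eq_zero_of_map_add_map_mul_X_eq_zero (h : IsSubstHom φ s) (hs : Associated (X ^ 2) s)
    {a b : R⟦X⟧} (hab : φ a + φ b * X = 0) : a = 0 ∧ b = 0 := by
  suffices hcoeff : ∀ n, coeff n a = 0 ∧ coeff n b = 0 from
    ⟨ext fun n => (hcoeff n).1, ext fun n => (hcoeff n).2⟩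
  intro n
  induction n generalizing a b with
  | zero =>
    obtain ⟨a', b', rfl, rfl, -⟩ := h.exists_X_mul_of_map_add_map_mul_X_eq_zero hs hab
    simp
  | succ n ih =>
    obtain ⟨a', b', rfl, rfl, hab'⟩ := h.exists_X_mul_of_map_add_map_mul_X_eq_zero hs hab
    simpa [coeff_succ_X_mul] using ih hab'

theorem exists_map_add_map_mul_X_eq (h : IsSubstHom φ s) (hs : Associated (X ^ 2) s)
    (g : R⟦X⟧) : ∃ a b, φ a + φ b * X = g := by
  -- `r^[k] g` is the `k`-th remainder of `g` under division by `s`; `c`, `d` read off its digits.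
  choose c d r hr using exists_eq_C_add_C_mul_X_add_mul_of_dvd hs.symm.dvd
  set a := mk fun k => c (r^[k] g)
  set b := mk fun k => d (r^[k] g)
  have htel : ∀ n, g = φ (trunc n a) + φ (trunc n b) * X + s ^ n * r^[n] g := by
    intro n
    induction n with
    | zero => simp
    | succ n ih =>
      rw [h.map_trunc_succ, h.map_trunc_succ, Function.iterate_succ_apply']
      simp only [a, b, coeff_mk]
      linear_combination ih + s ^ n * hr (r^[n] g)
  refine ⟨a, b, eq_of_forall_X_pow_dvd_sub fun n => ?_⟩
  have hXs : X ^ n ∣ s ^ n := pow_dvd_pow_of_dvd ((dvd_pow_self X two_ne_zero).trans hs.dvd) n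
  have htrunc : ∀ f : R⟦X⟧, s ^ n ∣ φ f - φ (trunc n f) := fun f => by
    simpa [← map_sub, h.map_X] using map_dvd φ (X_pow_dvd_sub_trunc f n)
  have hdiff : φ a + φ b * X - g
      = (φ a - φ (trunc n a)) + (φ b - φ (trunc n b)) * X - s ^ n * r^[n] g := by
    linear_combination -htel n
  rw [hdiff]
  exact hXs.trans <| dvd_sub (dvd_add (htrunc a) (dvd_mul_of_dvd_left (htrunc b) X))
    (dvd_mul_right _ _)

theorem bijective_map_add_map_mul_one_add_X (h : IsSubstHom φ s) (hs : Associated (X ^ 2) s) :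
    Function.Bijective fun ab : R⟦X⟧ × R⟦X⟧ => φ ab.1 + φ ab.2 * (1 + X) := by
  refine ⟨fun ab cd hab => ?_, fun g => ?_⟩
  · have h0 : φ (ab.1 + ab.2 - (cd.1 + cd.2)) + φ (ab.2 - cd.2) * X = 0 := by
      simp only [map_sub, map_add]
      linear_combination hab
    obtain ⟨h1, h2⟩ := h.eq_zero_of_map_add_map_mul_X_eq_zero hs h0
    rw [sub_eq_zero] at h1 h2
    exact Prod.ext (by linear_combination h1 - h2) h2
  · obtain ⟨a, b, hab⟩ := h.exists_map_add_map_mul_X_eq hs g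
    exact ⟨(a - b, b), by simp only [map_sub]; linear_combination hab⟩

theorem eval₂_one_add_X_eq_zero (h : IsSubstHom φ s) (hs : s * (1 + X) = X ^ 2) :
    (Polynomial.X ^ 2 - Polynomial.C (2 + X) * Polynomial.X + 1 : Polynomial R⟦X⟧).eval₂ φ (1 + X)
      = 0 := by
  simp only [Polynomial.eval₂_add, Polynomial.eval₂_sub, Polynomial.eval₂_mul,
    Polynomial.eval₂_pow, Polynomial.eval₂_X, Polynomial.eval₂_C, Polynomial.eval₂_one,
    Polynomial.eval₂_ofNat, map_add, map_ofNat, h.map_X]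
  linear_combination -hs

end IsSubstHom

end PowerSeries

namespace Polynomial

variable {A B : Type*} [CommRing A] [CommRing B] {f : A →+* B} {x : B}

theorem surjective_eval₂RingHom_of_surjective_add_mul
    (h : Function.Surjective fun ab : A × A => f ab.1 + f ab.2 * x) :
    Function.Surjective (eval₂RingHom f x) := fun y =>
  let ⟨ab, hab⟩ := h y
  ⟨C ab.1 + C ab.2 * X, by simpa using hab⟩

theorem ker_eval₂RingHom_eq_span_of_injective_add_mul
    (h : Function.Injective fun ab : A × A => f ab.1 + f ab.2 * x) {q : A[X]} (hq : q.Monic)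
    (hdeg : q.natDegree = 2) (hqx : q.eval₂ f x = 0) :
    RingHom.ker (eval₂RingHom f x) = Ideal.span {q} := by
  refine le_antisymm (fun P hP => ?_) ((Ideal.span_singleton_le_iff_mem _).mpr hqx)
  rw [Ideal.mem_span_singleton, ← modByMonic_eq_zero_iff_dvd hq]
  have hr : (P %ₘ q).natDegree ≤ 1 := by
    have := natDegree_modByMonic_lt P hq (by rintro rfl; simp at hdeg)
    omega
  have hrx : (P %ₘ q).eval₂ f x = 0 := by
    have := congrArg (eval₂ f x) (modByMonic_add_div P q)
    rwa [eval₂_add, eval₂_mul, hqx, zero_mul, add_zero, ← coe_eval₂RingHom, hP] at this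
  rw [eq_X_add_C_of_natDegree_le_one hr] at hrx ⊢
  have h0 : ((P %ₘ q).coeff 0, (P %ₘ q).coeff 1) = (0, 0) :=
    h (by simpa [add_comm] using hrx)
  simp only [Prod.mk.injEq] at h0
  simp [h0]

end Polynomial

theorem stmt_5_general (p : ℕ) [Fact p.Prime]
    (φ : PowerSeries ℤ_[p] →+* PowerSeries ℤ_[p])
    (hφ : ∀ (f : PowerSeries ℤ_[p]) (n : ℕ),
      φ f - Polynomial.eval₂ ((PowerSeries.C : ℤ_[p] →+* PowerSeries ℤ_[p]))
          (PowerSeries.X ^ 2 * Ring.inverse (1 + PowerSeries.X)) (PowerSeries.trunc n f)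
        ∈ Ideal.span {(PowerSeries.X : PowerSeries ℤ_[p]) ^ n}) :
    RingHom.ker (Polynomial.eval₂RingHom φ (1 + PowerSeries.X))
        = Ideal.span {Polynomial.X ^ 2
            - Polynomial.C (2 + PowerSeries.X : PowerSeries ℤ_[p]) * Polynomial.X + 1}
      ∧ Function.Surjective (Polynomial.eval₂RingHom φ (1 + PowerSeries.X))
      ∧ Function.Bijective (fun ab : PowerSeries ℤ_[p] × PowerSeries ℤ_[p] =>
          φ ab.1 + φ ab.2 * (1 + PowerSeries.X)) := by
  have hφ' : IsSubstHom φ (PowerSeries.X ^ 2 * Ring.inverse (1 + PowerSeries.X)) := hφ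
  have hunit : IsUnit (1 + PowerSeries.X : ℤ_[p]⟦X⟧) := isUnit_iff_constantCoeff.mpr (by simp)
  have hbij := hφ'.bijective_map_add_map_mul_one_add_X ⟨hunit.ringInverse.unit, rfl⟩
  have hroot := hφ'.eval₂_one_add_X_eq_zero <| by
    rw [mul_assoc, Ring.inverse_mul_cancel _ hunit, mul_one]
  exact ⟨Polynomial.ker_eval₂RingHom_eq_span_of_injective_add_mul hbij.1 (by monicity!)
      (by compute_degree!) hroot,
    Polynomial.surjective_eval₂RingHom_of_surjective_add_mul hbij.2, hbij⟩

/-- Let `φ : ℤ_p⟦X⟧ → ℤ_p⟦T⟧` be the continuous `ℤ_p`-algebra homomorphism determined by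
substituting `X ↦ T²(1+T)⁻¹` (characterized by fixing constants and by the property that
`φ f` agrees with the evaluation of any truncation of `f` at `T²(1+T)⁻¹` modulo arbitrarily
high powers of `T`).  Then the `ℤ_p⟦X⟧`-algebra homomorphism
`ℤ_p⟦X⟧[λ]/(λ² - (2+X)λ + 1) → ℤ_p⟦T⟧` sending `λ` to `1+T` is a ring isomorphism;
in particular `ℤ_p⟦T⟧` is free of rank 2 over `ℤ_p⟦X⟧` via `φ`, with basis `1, 1+T`. -/
theorem stmt_5 (p : ℕ) [Fact p.Prime]
    (φ : PowerSeries ℤ_[p] →+* PowerSeries ℤ_[p])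
    (hφC : ∀ a : ℤ_[p], φ ((PowerSeries.C : ℤ_[p] →+* PowerSeries ℤ_[p]) a) = (PowerSeries.C : ℤ_[p] →+* PowerSeries ℤ_[p]) a)
    (hφ : ∀ (f : PowerSeries ℤ_[p]) (n : ℕ),
      φ f - Polynomial.eval₂ ((PowerSeries.C : ℤ_[p] →+* PowerSeries ℤ_[p]))
          (PowerSeries.X ^ 2 * Ring.inverse (1 + PowerSeries.X)) (PowerSeries.trunc n f)
        ∈ Ideal.span {(PowerSeries.X : PowerSeries ℤ_[p]) ^ n}) :
    RingHom.ker (Polynomial.eval₂RingHom φ (1 + PowerSeries.X))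
        = Ideal.span {Polynomial.X ^ 2
            - Polynomial.C (2 + PowerSeries.X : PowerSeries ℤ_[p]) * Polynomial.X + 1}
      ∧ Function.Surjective (Polynomial.eval₂RingHom φ (1 + PowerSeries.X))
      ∧ Function.Bijective (fun ab : PowerSeries ℤ_[p] × PowerSeries ℤ_[p] =>
          φ ab.1 + φ ab.2 * (1 + PowerSeries.X)) :=
  stmt_5_general p φ hφ
end

section
/- Let $p$ be a prime and $N \ge 2$ an integer with $p \nmid (N-1)$ and $v_p(N+1) = r \ge 1$. Let $\lambda = 1+T \in \mathbb{Z}_p\llbracket T \rrbracket$, a unit. Then the element $\lambda + \lambda^{-1} - \lambda^{N} - \lambda^{-N}$ is an associate of $T\,\big((1+T)^{p^r} - 1\big)$ in $\mathbb{Z}_p\llbracket T \rrbracket$; that is, there is a unit $w \in \mathbb{Z}_p\llbracket T \rrbracket^{\times}$ with $\lambda + \lambda^{-1} - \lambda^{N} - \lambda^{-N} = w \cdot T\,\big((1+T)^{p^r} - 1\big).$ -/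
/-!
Writing `λ^{-N}` for the inverse of `λ^N`, one has the factorisation
`λ + λ⁻¹ - λ^N - λ^{-N} = -λ^{-N} (λ^{N+1} - 1)(λ^{N-1} - 1)`.
For a power series `f` with constant term `1`, `f^k - 1 = (f - 1)(1 + f + ⋯ + f^{k-1})`
and the second factor has constant term `k`, so `f^k - 1` is associated to `f - 1` as soon
as `k` is invertible. Writing `N + 1 = p^r m` with `p ∤ m`, this makes `λ^{N+1} - 1`
associated to `λ^{p^r} - 1`, and `λ^{N-1} - 1` associated to `λ - 1 = T` since `p ∤ N - 1`.
-/

open PowerSeries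

theorem Units.add_inv_sub_pow_sub_inv_pow {R : Type*} [CommRing R] (u : Rˣ) {N : ℕ}
    (hN : 1 ≤ N) :
    (u : R) + ↑u⁻¹ - ↑(u ^ N) - ↑(u ^ N)⁻¹
      = -↑(u ^ N)⁻¹ * (((u : R) ^ (N + 1) - 1) * ((u : R) ^ (N - 1) - 1)) := by
  obtain ⟨n, rfl⟩ := Nat.exists_eq_add_of_le' hN
  have h : (u : R) * ↑u⁻¹ = 1 := u.mul_inv
  have h₀ : ((u : R) * ↑u⁻¹) ^ n = 1 := by rw [h, one_pow]
  have h₁ : ((u : R) * ↑u⁻¹) ^ (n + 1) = 1 := by rw [h, one_pow]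
  simp only [Units.val_pow_eq_pow_val, ← inv_pow, Nat.add_sub_cancel]
  linear_combination ((u : R) ^ (n + 1) - u) * h₁ - (↑u⁻¹ : R) * h₀

theorem PowerSeries.associated_sub_one_pow_sub_one {R : Type*} [CommRing R] {f : R⟦X⟧}
    (hf : constantCoeff f = 1) {k : ℕ} (hk : IsUnit (k : R)) :
    Associated (f - 1) (f ^ k - 1) := by
  have hgeom : IsUnit (∑ i ∈ Finset.range k, f ^ i) := by
    simpa [isUnit_iff_constantCoeff, map_sum, hf] using hk
  rw [← mul_geom_sum]
  exact associated_mul_unit_right _ _ hgeom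

theorem PadicInt.isUnit_natCast_iff {p : ℕ} [Fact p.Prime] {n : ℕ} :
    IsUnit (n : ℤ_[p]) ↔ ¬ p ∣ n := by
  rw [isUnit_iff, norm_natCast_eq_one_iff, Nat.Prime.coprime_iff_not_dvd Fact.out]

theorem Nat.exists_eq_pow_padicValNat_mul_not_dvd {p : ℕ} [Fact p.Prime] {n : ℕ}
    (hn : n ≠ 0) : ∃ m, n = p ^ padicValNat p n * m ∧ ¬ p ∣ m :=
  ⟨ordCompl[p] n, by rw [← factorization_def n Fact.out, ordProj_mul_ordCompl_eq_self],
    not_dvd_ordCompl Fact.out hn⟩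

theorem stmt_9_general (p : ℕ) [Fact p.Prime] (N r : ℕ) (hN : 2 ≤ N)
    (hNm : ¬ (p : ℤ) ∣ (N - 1 : ℤ)) (hval : padicValNat p (N + 1) = r)
    (lam : (PowerSeries ℤ_[p])ˣ) (hlam : (lam : PowerSeries ℤ_[p]) = 1 + PowerSeries.X) :
    ∃ w : (PowerSeries ℤ_[p])ˣ,
      (lam : PowerSeries ℤ_[p]) + ((lam⁻¹ : (PowerSeries ℤ_[p])ˣ) : PowerSeries ℤ_[p])
          - ((lam ^ N : (PowerSeries ℤ_[p])ˣ) : PowerSeries ℤ_[p])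
          - (((lam ^ N)⁻¹ : (PowerSeries ℤ_[p])ˣ) : PowerSeries ℤ_[p])
        = (w : PowerSeries ℤ_[p])
            * (PowerSeries.X * ((1 + PowerSeries.X) ^ (p ^ r) - 1)) := by
  have hconst : constantCoeff (1 + X : ℤ_[p]⟦X⟧) = 1 := by simp
  obtain ⟨m, hm, hpm⟩ :=
    Nat.exists_eq_pow_padicValNat_mul_not_dvd (p := p) (n := N + 1) (by omega)
  have hpN : ¬ p ∣ N - 1 := by
    rwa [← Int.natCast_dvd_natCast, Nat.cast_sub (by omega), Nat.cast_one]
  have hT : Associated X ((lam : ℤ_[p]⟦X⟧) ^ (N - 1) - 1) := by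
    simpa [hlam] using
      associated_sub_one_pow_sub_one hconst (PadicInt.isUnit_natCast_iff.2 hpN)
  have hpow : Associated ((1 + X) ^ p ^ r - 1) ((lam : ℤ_[p]⟦X⟧) ^ (N + 1) - 1) := by
    rw [hm, hval, pow_mul, hlam]
    exact associated_sub_one_pow_sub_one (by simp) (PadicInt.isUnit_natCast_iff.2 hpm)
  obtain ⟨w, hw⟩ := (hT.mul_mul hpow).trans <|
    associated_unit_mul_right _ _ (lam ^ N)⁻¹.isUnit.neg
  refine ⟨w, ?_⟩
  rw [lam.add_inv_sub_pow_sub_inv_pow (by omega), mul_comm (_ ^ (N + 1) - 1), ← hw, mul_comm]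

/-- Let `p` be prime, `N ≥ 2` with `p ∤ (N-1)` and `v_p(N+1) = r ≥ 1`.  Let `λ = 1 + T`,
a unit of `ℤ_p⟦T⟧`.  Then `λ + λ⁻¹ - λ^N - λ^(-N)` is an associate of
`T * ((1+T)^(p^r) - 1)` in `ℤ_p⟦T⟧`. -/
theorem stmt_9 (p : ℕ) [Fact p.Prime] (N r : ℕ) (hN : 2 ≤ N)
    (hNm : ¬ (p : ℤ) ∣ (N - 1 : ℤ)) (hr : 1 ≤ r) (hval : padicValNat p (N + 1) = r)
    (lam : (PowerSeries ℤ_[p])ˣ) (hlam : (lam : PowerSeries ℤ_[p]) = 1 + PowerSeries.X) :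
    ∃ w : (PowerSeries ℤ_[p])ˣ,
      (lam : PowerSeries ℤ_[p]) + ((lam⁻¹ : (PowerSeries ℤ_[p])ˣ) : PowerSeries ℤ_[p])
          - ((lam ^ N : (PowerSeries ℤ_[p])ˣ) : PowerSeries ℤ_[p])
          - (((lam ^ N)⁻¹ : (PowerSeries ℤ_[p])ˣ) : PowerSeries ℤ_[p])
        = (w : PowerSeries ℤ_[p])
            * (PowerSeries.X * ((1 + PowerSeries.X) ^ (p ^ r) - 1)) :=
  stmt_9_general p N r hN hNm hval lam hlam
end

section
/- Let $p$ be a prime and $r \ge 1$. Let $A = \mathbb{Z}_p\llbracket T \rrbracket / \big(T\,((1+T)^{p^r}-1)\big)$ and let $q : A \twoheadrightarrow \mathbb{Z}_p\llbracket T \rrbracket / \big((1+T)^{p^r}-1\big)$ be the natural quotient map. Let $u \in A$ be the image of $T^2(1+T)^{-1}$. Then the restriction of $q$ to the $\mathbb{Z}_p$-subalgebra of $A$ generated by $u$ is injective. -/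
/-!
Write `f = (1+X)^(p^r) - 1` and `v = X²(1+X)⁻¹`. An element of the subalgebra is the image of
`w = P(v)` for a polynomial `P`, so `w ≡ P(0) mod X²`. If `w` lies in the kernel, then `f ∣ w`;
as `f(0) = 0` this forces `P(0) = 0`, hence `X² ∣ w`. Writing `w = f h`, the coefficient of `X`
in `w` is `p^r h(0) = 0`, and since `ℤ_p` is torsion-free `X ∣ h`, i.e. `X f ∣ w`.
-/

open PowerSeries

theorem Algebra.exists_sub_algebraMap_mem_of_mem_adjoin_singleton {R S : Type*} [CommRing R]
    [CommRing S] [Algebra R S] {I : Ideal S} {v w : S} (hv : v ∈ I)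
    (hw : w ∈ Algebra.adjoin R {v}) : ∃ c : R, w - algebraMap R S c ∈ I := by
  rw [Algebra.adjoin_singleton_eq_range_aeval, AlgHom.mem_range] at hw
  obtain ⟨P, rfl⟩ := hw
  obtain ⟨Q, hQ⟩ := Polynomial.X_dvd_sub_C (p := P)
  refine ⟨P.coeff 0, ?_⟩
  have hsub : Polynomial.aeval v P - algebraMap R S (P.coeff 0) =
      Polynomial.aeval v (P - Polynomial.C (P.coeff 0)) := by
    simp
  rw [hsub, hQ, map_mul, Polynomial.aeval_X]
  exact I.mul_mem_right _ hv

namespace PowerSeries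

variable {R : Type*} [CommRing R]

theorem coeff_one_one_add_X_pow (n : ℕ) : coeff 1 ((1 + X : R⟦X⟧) ^ n) = n := by
  induction n with
  | zero => simp
  | succ n ih =>
    rw [pow_succ, mul_add, mul_one, map_add, ih, coeff_succ_mul_X]
    simp

theorem X_sq_dvd_of_mem_adjoin {v w : R⟦X⟧} (hv : X ^ 2 ∣ v)
    (hw : w ∈ Algebra.adjoin R {v}) (hw0 : constantCoeff w = 0) : X ^ 2 ∣ w := by
  obtain ⟨c, hc⟩ := Algebra.exists_sub_algebraMap_mem_of_mem_adjoin_singleton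
    (Ideal.mem_span_singleton.mpr hv) hw
  rw [Ideal.mem_span_singleton] at hc
  have hc0 : c = 0 := by
    simpa [hw0] using X_pow_dvd_iff.mp hc 0 two_pos
  simpa [hc0] using hc

theorem X_mul_dvd_of_dvd_of_X_sq_dvd {f w : R⟦X⟧} (hf0 : constantCoeff f = 0)
    (hf1 : IsLeftRegular (coeff 1 f)) (hfw : f ∣ w) (hXw : X ^ 2 ∣ w) : X * f ∣ w := by
  obtain ⟨g, rfl⟩ := X_dvd_iff.mpr hf0
  obtain ⟨h, rfl⟩ := hfw
  have hh0 : constantCoeff h = 0 := by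
    apply hf1
    have := X_pow_dvd_iff.mp hXw 1 one_lt_two
    rw [mul_assoc, coeff_succ_X_mul, coeff_zero_eq_constantCoeff_apply, map_mul] at this
    simpa [coeff_succ_X_mul] using this
  obtain ⟨k, rfl⟩ := X_dvd_iff.mpr hh0
  exact ⟨k, by ring⟩

theorem X_mul_dvd_of_dvd_of_mem_adjoin {f v w : R⟦X⟧} (hf0 : constantCoeff f = 0)
    (hf1 : IsLeftRegular (coeff 1 f)) (hv : X ^ 2 ∣ v) (hw : w ∈ Algebra.adjoin R {v})
    (hfw : f ∣ w) : X * f ∣ w := by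
  have hw0 : constantCoeff w = 0 := by
    obtain ⟨h, rfl⟩ := hfw
    rw [map_mul, hf0, zero_mul]
  exact X_mul_dvd_of_dvd_of_X_sq_dvd hf0 hf1 hfw (X_sq_dvd_of_mem_adjoin hv hw hw0)

end PowerSeries

theorem stmt_10_general (p : ℕ) [Fact p.Prime] (r : ℕ) :
    Set.InjOn
      (Ideal.Quotient.factor
        (S := Ideal.span {PowerSeries.X *
          ((1 + PowerSeries.X : PowerSeries ℤ_[p]) ^ (p ^ r) - 1)})
        (T := Ideal.span {(1 + PowerSeries.X : PowerSeries ℤ_[p]) ^ (p ^ r) - 1})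
        (Ideal.span_singleton_le_span_singleton.mpr (dvd_mul_left _ PowerSeries.X)))
      (↑(Algebra.adjoin ℤ_[p]
        {(Ideal.Quotient.mk
            (Ideal.span {PowerSeries.X *
              ((1 + PowerSeries.X : PowerSeries ℤ_[p]) ^ (p ^ r) - 1)}))
          (PowerSeries.X ^ 2 * Ring.inverse (1 + PowerSeries.X))}) : Set _) := by
  set f : ℤ_[p]⟦X⟧ := (1 + X) ^ (p ^ r) - 1
  set v : ℤ_[p]⟦X⟧ := X ^ 2 * Ring.inverse (1 + X)
  intro a ha b hb hab
  obtain ⟨w, hw, hwab⟩ : ∃ w ∈ Algebra.adjoin ℤ_[p] {v},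
      Ideal.Quotient.mkₐ ℤ_[p] (Ideal.span {X * f}) w = a - b := by
    rw [← Subalgebra.mem_map, ← Algebra.adjoin_image, Set.image_singleton]
    exact sub_mem ha hb
  have hfw : f ∣ w := by
    rw [← Ideal.mem_span_singleton, ← Ideal.Quotient.eq_zero_iff_mem,
      ← Ideal.Quotient.factor_mk (Ideal.span_singleton_le_span_singleton.mpr (dvd_mul_left f X)),
      ← Ideal.Quotient.mkₐ_eq_mk ℤ_[p], hwab, map_sub, hab, sub_self]
  have hf1 : IsLeftRegular (coeff 1 f) := by
    rw [map_sub, coeff_one_one_add_X_pow, coeff_one, if_neg one_ne_zero, sub_zero]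
    have hpr : ((p ^ r : ℕ) : ℤ_[p]) ≠ 0 :=
      Nat.cast_ne_zero.mpr (pow_ne_zero r (Fact.out : p.Prime).ne_zero)
    exact (IsRegular.of_ne_zero hpr).left
  have hXfw := X_mul_dvd_of_dvd_of_mem_adjoin (by simp [f]) hf1 (dvd_mul_right _ _) hw hfw
  rw [← sub_eq_zero, ← hwab, Ideal.Quotient.mkₐ_eq_mk, Ideal.Quotient.eq_zero_iff_mem]
  exact Ideal.mem_span_singleton.mpr hXfw

/-- Let `A = ℤ_p⟦T⟧/(T((1+T)^(p^r)-1))`, let `q : A → ℤ_p⟦T⟧/((1+T)^(p^r)-1)` be the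
natural quotient map, and let `u ∈ A` be the image of `T²(1+T)⁻¹`.  Then `q` is
injective on the `ℤ_p`-subalgebra of `A` generated by `u`. -/
theorem stmt_10 (p : ℕ) [Fact p.Prime] (r : ℕ) (hr : 1 ≤ r) :
    Set.InjOn
      (Ideal.Quotient.factor
        (S := Ideal.span {PowerSeries.X *
          ((1 + PowerSeries.X : PowerSeries ℤ_[p]) ^ (p ^ r) - 1)})
        (T := Ideal.span {(1 + PowerSeries.X : PowerSeries ℤ_[p]) ^ (p ^ r) - 1})
        (Ideal.span_singleton_le_span_singleton.mpr (dvd_mul_left _ PowerSeries.X)))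
      (↑(Algebra.adjoin ℤ_[p]
        {(Ideal.Quotient.mk
            (Ideal.span {PowerSeries.X *
              ((1 + PowerSeries.X : PowerSeries ℤ_[p]) ^ (p ^ r) - 1)}))
          (PowerSeries.X ^ 2 * Ring.inverse (1 + PowerSeries.X))}) : Set _) :=
  stmt_10_general p r
end

section
/- Let $p$ be a prime and let $g \in \mathbb{Z}_p[X]$ be a polynomial with $g(0) \ne 0$. Let $R = \mathbb{Z}_p[X]/(X\,g(X))$ and let $J \subseteq R$ be the ideal generated by the image of $X$ (equivalently, the kernel of the $\mathbb{Z}_p$-algebra map $R \to \mathbb{Z}_p$ sending $X$ to $0$). Then $J/J^2$ is isomorphic to $\mathbb{Z}_p/(g(0))$ as a $\mathbb{Z}_p$-module. -/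
/-!
Everything works over an arbitrary commutative ring `R`. Write `π : R[X] → R[X] ⧸ (X g)`.
Since `J² = π((X)²)`, an element `π(X h)` of `J` lies in `J²` iff `X h ∈ (X²) + (X g) = X · (X, g)`,
i.e. (as `X` is a nonzerodivisor) iff `h ∈ (X, g)`, i.e. iff `h(0) ∈ (g(0))`. Hence
`a ↦ a · π(X)` maps `R` onto `J/J²` with kernel `(g(0))`.
-/

open Polynomial Ideal

namespace Polynomial

variable {R : Type*} [CommRing R] (g : R[X])

theorem mem_span_X_sup_span_iff (h : R[X]) :
    h ∈ span {X} ⊔ span {g} ↔ h.eval 0 ∈ span {g.eval 0} := by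
  simp only [mem_span_singleton_sup, mem_span_singleton']
  constructor
  · rintro ⟨a, _, ⟨c, rfl⟩, rfl⟩
    exact ⟨c.eval 0, by simp [mul_comm]⟩
  · rintro ⟨c, hc⟩
    obtain ⟨u, hu⟩ := X_dvd_sub_C (p := h)
    obtain ⟨v, hv⟩ := X_dvd_sub_C (p := g)
    have hC : C (h.eval 0) = C c * C (g.eval 0) := by rw [← C_mul, hc]
    refine ⟨u - v * C c, _, ⟨C c, rfl⟩, ?_⟩
    rw [coeff_zero_eq_eval_zero] at hu hv
    linear_combination (-1 : R[X]) * hu + C c * hv - hC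

theorem X_mul_mem_span_X_mul_iff {K : Ideal R[X]} {h : R[X]} :
    X * h ∈ span {X} * K ↔ h ∈ K := by
  rw [mem_span_singleton_mul]
  exact ⟨fun ⟨_, hz, hzh⟩ => isRegular_X.left hzh ▸ hz, fun hh => ⟨h, hh, rfl⟩⟩

theorem mk_X_mul_mem_span_mk_X_sq_iff (h : R[X]) :
    Ideal.Quotient.mk (span {X * g}) X * Ideal.Quotient.mk _ h ∈
      span {Ideal.Quotient.mk (span {X * g}) X} ^ 2 ↔ h.eval 0 ∈ span {g.eval 0} := by
  rw [← map_mul, ← Set.image_singleton (f := Ideal.Quotient.mk _), ← map_span, ← Ideal.map_pow,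
    mem_quotient_iff_mem_sup, sq, ← span_singleton_mul_span_singleton, ← Ideal.mul_sup,
    X_mul_mem_span_X_mul_iff, mem_span_X_sup_span_iff]

noncomputable def toCotangentSpanMkX :
    R →ₗ[R] (span {Ideal.Quotient.mk (span {X * g}) X}).Cotangent :=
  LinearMap.toSpanSingleton R _
    ((span {Ideal.Quotient.mk (span {X * g}) X}).toCotangent ⟨_, mem_span_singleton_self _⟩)

theorem toCotangentSpanMkX_apply (a : R) :
    toCotangentSpanMkX g a = (span {Ideal.Quotient.mk (span {X * g}) X}).toCotangent
      ⟨Ideal.Quotient.mk _ X * Ideal.Quotient.mk _ (C a),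
        mul_mem_right _ _ (mem_span_singleton_self _)⟩ := by
  rw [toCotangentSpanMkX, LinearMap.toSpanSingleton_apply,
    ← algebraMap_smul (R[X] ⧸ span {X * g}), ← map_smul]
  exact congrArg _ (Subtype.ext (mul_comm _ _))

theorem ker_toCotangentSpanMkX : LinearMap.ker (toCotangentSpanMkX g) = span {g.eval 0} := by
  ext a
  rw [LinearMap.mem_ker, toCotangentSpanMkX_apply, toCotangent_eq_zero,
    mk_X_mul_mem_span_mk_X_sq_iff, eval_C]

theorem toCotangentSpanMkX_surjective : Function.Surjective (toCotangentSpanMkX g) := by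
  intro y
  obtain ⟨⟨r, hr⟩, rfl⟩ := toCotangent_surjective _ y
  obtain ⟨s, rfl⟩ := mem_span_singleton.1 hr
  obtain ⟨h, rfl⟩ := Ideal.Quotient.mk_surjective s
  refine ⟨h.eval 0, ?_⟩
  rw [toCotangentSpanMkX_apply, toCotangent_eq]
  simpa [← mul_sub] using mk_X_mul_mem_span_mk_X_sq_iff g (C (h.eval 0) - h)

noncomputable def cotangentSpanMkXEquiv :
    (span {Ideal.Quotient.mk (span {X * g}) X}).Cotangent ≃ₗ[R] R ⧸ span {g.eval 0} :=
  ((toCotangentSpanMkX g).quotKerEquivOfSurjective (toCotangentSpanMkX_surjective g)).symm.trans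
    (Submodule.quotEquivOfEq _ _ (ker_toCotangentSpanMkX g))

end Polynomial

theorem stmt_13_general (p : ℕ) [Fact p.Prime] (g : Polynomial ℤ_[p])
    (J : Ideal (Polynomial ℤ_[p] ⧸ Ideal.span {Polynomial.X * g}))
    (hJ : J = Ideal.span
      {Ideal.Quotient.mk (Ideal.span {Polynomial.X * g}) Polynomial.X}) :
    Nonempty (J.Cotangent ≃ₗ[ℤ_[p]] (ℤ_[p] ⧸ Ideal.span {g.eval 0})) := by
  subst hJ
  exact ⟨cotangentSpanMkXEquiv g⟩

/-- Let `g ∈ ℤ_p[X]` with `g(0) ≠ 0`, let `R = ℤ_p[X]/(X·g(X))` and let `J ⊆ R` be the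
ideal generated by the image of `X` (equivalently, the kernel of the `ℤ_p`-algebra map
`R → ℤ_p` sending `X` to `0`).  Then `J/J²` is isomorphic to `ℤ_p/(g(0))` as a
`ℤ_p`-module. -/
theorem stmt_13 (p : ℕ) [Fact p.Prime] (g : Polynomial ℤ_[p])
    (hg : g.eval 0 ≠ 0)
    (J : Ideal (Polynomial ℤ_[p] ⧸ Ideal.span {Polynomial.X * g}))
    (hJ : J = Ideal.span
      {Ideal.Quotient.mk (Ideal.span {Polynomial.X * g}) Polynomial.X}) :
    Nonempty (J.Cotangent ≃ₗ[ℤ_[p]] (ℤ_[p] ⧸ Ideal.span {g.eval 0})) :=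
  stmt_13_general p g J hJ
end
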